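/- Let z be a counting measure on (0,∞) and define z*(s) = ∫_0^∞ φ(s − s') dz(s') where φ is the density with φ(s) = (2/3)·e·b·e^{−bs} for s > 1/b, φ(s) = (2/3)·b²·s for 0 < s ≤ 1/b, φ(s) = 0 for s ≤ 0, b ≥ 2 an integer. Then for all s > 0, z*(s) ≤ b·z*((s,∞)), where z*((s,∞)) = ∫_0^∞ (1 − Φ(s − s')) dz(s') and Φ is the CDF of φ. -/

import Mathlib

/-!
The hazard rate `φ / (1 - Φ)` of `φ` is at most `b` everywhere: beyond `1 / b` the tail
`1 - Φ t = (2/3) e · e^{-bt}` is exponential with rate exactly `b`, and on `(0, 1/b]` the bound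
reduces to `(1 - u) (3 + u) ≥ 0` for `u = bt ≤ 1`. Integrating `φ(s - ·) ≤ b (1 - Φ(s - ·))` against `z`
gives the claim.
-/

open Real MeasureTheory

/-- The piecewise density φ with parameter b. -/
noncomputable def phi (b : ℤ) (s : ℝ) : ℝ :=
  if s ≤ 0 then 0
  else if s ≤ 1 / b then (2 / 3) * (b : ℝ) ^ 2 * s
  else (2 / 3) * Real.exp 1 * (b : ℝ) * Real.exp (-(b : ℝ) * s)

/-- The CDF of φ. -/
noncomputable def Phi (b : ℤ) (s : ℝ) : ℝ := ∫ s' in Set.Iic s, phi b s'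

open Set

lemma exp_one_mul_exp_neg_mul_one_div {x : ℝ} (hx : x ≠ 0) : exp 1 * exp (-x * (1 / x)) = 1 := by
  rw [← exp_add, show 1 + -x * (1 / x) = 0 by field_simp; ring, exp_zero]

section

variable {b : ℤ}

lemma phi_of_nonpos {t : ℝ} (ht : t ≤ 0) : phi b t = 0 := if_pos ht

lemma phi_of_mem_Ioc {t : ℝ} (ht : t ∈ Ioc 0 (1 / (b : ℝ))) :
    phi b t = 2 / 3 * (b : ℝ) ^ 2 * t := by
  rw [phi, if_neg ht.1.not_ge, if_pos ht.2]

lemma phi_of_one_div_lt (hb : 0 < b) {t : ℝ} (ht : 1 / (b : ℝ) < t) :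
    phi b t = 2 / 3 * exp 1 * b * exp (-b * t) := by
  have hb' : (0 : ℝ) < 1 / b := by positivity
  rw [phi, if_neg (hb'.trans ht).not_ge, if_neg ht.not_ge]

lemma continuous_phi (hb : 0 < b) : Continuous (phi b) := by
  have hb' : (0 : ℝ) < b := by exact_mod_cast hb
  have hexp := exp_one_mul_exp_neg_mul_one_div hb'.ne'
  have hinner : Continuous fun s : ℝ =>
      if s ≤ 1 / b then 2 / 3 * (b : ℝ) ^ 2 * s else 2 / 3 * exp 1 * b * exp (-b * s) :=
    Continuous.if_le (by fun_prop) (by fun_prop) continuous_id continuous_const fun s hs => by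
      subst hs
      have hsq : (b : ℝ) ^ 2 * (1 / b) = b := by field_simp
      linear_combination (2 / 3 : ℝ) * hsq - (2 / 3 * b : ℝ) * hexp
  refine Continuous.if_le continuous_const hinner continuous_id continuous_const fun s hs => ?_
  subst hs
  rw [if_pos (by positivity), mul_zero]

lemma Phi_eq_setIntegral_Ioc (t : ℝ) : Phi b t = ∫ s in Ioc 0 t, phi b s :=
  setIntegral_eq_of_subset_of_forall_sdiff_eq_zero measurableSet_Iic Ioc_subset_Iic_self
    fun _ hs => phi_of_nonpos <| not_lt.1 fun h => hs.2 ⟨h, hs.1⟩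

lemma Phi_of_nonpos {t : ℝ} (ht : t ≤ 0) : Phi b t = 0 := by
  rw [Phi_eq_setIntegral_Ioc, Ioc_eq_empty ht.not_gt, Measure.restrict_empty, integral_zero_measure]

lemma Phi_of_mem_Ioc {t : ℝ} (ht : t ∈ Ioc 0 (1 / (b : ℝ))) :
    Phi b t = 1 / 3 * (b : ℝ) ^ 2 * t ^ 2 := by
  rw [Phi_eq_setIntegral_Ioc, setIntegral_congr_fun measurableSet_Ioc
      fun s hs => phi_of_mem_Ioc ⟨hs.1, hs.2.trans ht.2⟩,
    ← intervalIntegral.integral_of_le ht.1.le, intervalIntegral.integral_const_mul, integral_id]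
  ring

lemma Phi_one_div (hb : 0 < b) : Phi b (1 / b) = 1 / 3 := by
  have hb' : (0 : ℝ) < b := by exact_mod_cast hb
  rw [Phi_of_mem_Ioc ⟨by positivity, le_rfl⟩]
  field_simp

lemma integral_phi_of_one_div_le (hb : 0 < b) {t : ℝ} (ht : 1 / (b : ℝ) ≤ t) :
    ∫ s in Ioc (1 / (b : ℝ)) t, phi b s = 2 / 3 - 2 / 3 * exp 1 * exp (-b * t) := by
  have hb' : (0 : ℝ) < b := by exact_mod_cast hb
  have hderiv : ∀ s, HasDerivAt (fun s => -(2 / 3 * exp 1) * exp (-b * s))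
      (2 / 3 * exp 1 * b * exp (-b * s)) s := fun s =>
    (((hasDerivAt_id' s).const_mul (-(b : ℝ))).exp.const_mul _).congr_deriv (by ring)
  rw [setIntegral_congr_fun measurableSet_Ioc fun s hs => phi_of_one_div_lt hb hs.1,
    ← intervalIntegral.integral_of_le ht,
    intervalIntegral.integral_eq_sub_of_hasDerivAt (fun s _ => hderiv s)
      ((by fun_prop : Continuous _).intervalIntegrable _ _)]
  linear_combination (2 / 3 : ℝ) * exp_one_mul_exp_neg_mul_one_div hb'.ne'

lemma Phi_of_one_div_lt (hb : 0 < b) {t : ℝ} (ht : 1 / (b : ℝ) < t) :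
    Phi b t = 1 - 2 / 3 * exp 1 * exp (-b * t) := by
  have hb' : (0 : ℝ) < 1 / b := by positivity
  have hint : ∀ u v, IntegrableOn (phi b) (Ioc u v) := fun _ _ =>
    (continuous_phi hb).integrableOn_Ioc
  rw [Phi_eq_setIntegral_Ioc, ← Ioc_union_Ioc_eq_Ioc hb'.le ht.le,
    setIntegral_union (Ioc_disjoint_Ioc_of_le le_rfl) measurableSet_Ioc (hint _ _) (hint _ _),
    ← Phi_eq_setIntegral_Ioc, Phi_one_div hb, integral_phi_of_one_div_le hb ht.le]
  ring

lemma phi_le_mul_one_sub_Phi (hb : 0 < b) (t : ℝ) : phi b t ≤ b * (1 - Phi b t) := by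
  have hb' : (0 : ℝ) < b := by exact_mod_cast hb
  rcases le_or_gt t 0 with ht | ht
  · rw [phi_of_nonpos ht, Phi_of_nonpos ht]
    linarith
  rcases le_or_gt t (1 / b) with ht' | ht'
  · rw [phi_of_mem_Ioc ⟨ht, ht'⟩, Phi_of_mem_Ioc ⟨ht, ht'⟩]
    have hu : b * t ≤ 1 := by rwa [le_div_iff₀ hb', mul_comm] at ht'
    nlinarith [mul_nonneg (sub_nonneg.2 hu) (mul_pos hb' ht).le]
  · rw [phi_of_one_div_lt hb ht', Phi_of_one_div_lt hb ht']
    exact le_of_eq (by ring)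

end

theorem convolved_density_le_b_mul_tail_general (b : ℤ) (hb : 2 ≤ b)
    (z : Measure ℝ) :
    ∀ s : ℝ, 0 < s →
      ∫⁻ s', ENNReal.ofReal (phi b (s - s')) ∂z
        ≤ ENNReal.ofReal (b : ℝ) * ∫⁻ s', ENNReal.ofReal (1 - Phi b (s - s')) ∂z := by
  intro s _
  have hb₀ : 0 < b := by omega
  rw [← lintegral_const_mul' _ _ ENNReal.ofReal_ne_top]
  refine lintegral_mono fun s' => ?_
  rw [← ENNReal.ofReal_mul (by exact_mod_cast hb₀.le)]
  exact ENNReal.ofReal_le_ofReal (phi_le_mul_one_sub_Phi hb₀ (s - s'))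

theorem convolved_density_le_b_mul_tail (b : ℤ) (hb : 2 ≤ b)
    (z : Measure ℝ) [IsLocallyFiniteMeasure z]
    (hz : ∃ (ι : Type) (_ : Countable ι) (p : ι → ℝ),
      (∀ i, 0 < p i) ∧ z = Measure.sum fun i => Measure.dirac (p i)) :
    ∀ s : ℝ, 0 < s →
      ∫⁻ s', ENNReal.ofReal (phi b (s - s')) ∂z
        ≤ ENNReal.ofReal (b : ℝ) * ∫⁻ s', ENNReal.ofReal (1 - Phi b (s - s')) ∂z :=
  convolved_density_le_b_mul_tail_general b hb z
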